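/- Let G be a pair of d-dimensional layer-permuted butterflies with left layer permutation π and right layer permutation σ; fix q ≤ d and m = d − q, with q ≥ 1. Suppose (two reused dimensions) σ(q) = π(j) = i for some 1 ≤ j ≤ m+1 and π(m+1) = σ(k) = l for some k ∈ {q, …, d}, with i ≠ l. Then for every connected component C of the q-dimensional sub-butterfly connectivity graph, the set of children of the vertices of C (each left vertex x* has children x0* and x1*, fixing bit π(m+1); each right vertex *y has children *0y and *1y, fixing bit σ(q)) splits into exactly four connected components of the (q−1)-dimensional sub-butterfly connectivity graph, determined by the four possible values of the pair of bits in positions i and l. -/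

import Mathlib

/-- A binary string of length `d`. -/
abbrev BStr (d : ℕ) := Fin d → Bool

/-- The string `b` lies in the left sub-butterfly `x*` of a pair of
`d`-dimensional layer-permuted butterflies with left layer permutation `π`
(written `0`-based): bit `π i` of `b` equals `x i` for all `i < m = d - q`. -/
def leftSubMem (d q : ℕ) (π : Equiv.Perm (Fin d))
    (x : Fin (d - q) → Bool) (b : BStr d) : Prop :=
  ∀ i : Fin (d - q), b (π (Fin.castLE (Nat.sub_le d q) i)) = x i

/-- The string `b` lies in the right sub-butterfly `*y` of a pair of
`d`-dimensional layer-permuted butterflies with right layer permutation `σ`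
(written `0`-based): bit `σ (q + j)` of `b` equals `y j` for all
`j < m = d - q`. -/
def rightSubMem (d q : ℕ) (hq : q ≤ d) (σ : Equiv.Perm (Fin d))
    (y : Fin (d - q) → Bool) (b : BStr d) : Prop :=
  ∀ j : Fin (d - q), b (σ (Fin.castLE (by omega) (Fin.natAdd q j))) = y j

/-- The left sub-butterfly `x*` and the right sub-butterfly `*y` share at least
one node on layer `d`. -/
def connRel (d q : ℕ) (hq : q ≤ d) (π σ : Equiv.Perm (Fin d))
    (x y : Fin (d - q) → Bool) : Prop :=
  ∃ b : BStr d, leftSubMem d q π x b ∧ rightSubMem d q hq σ y b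

/-- The `q`-dimensional sub-butterfly connectivity graph of a pair of
`d`-dimensional layer-permuted butterflies: a bipartite graph whose left
vertices (`Sum.inl`) are the `2^m` left sub-butterflies `x*` and whose right
vertices (`Sum.inr`) are the `2^m` right sub-butterflies `*y`, adjacent iff
the two sub-butterflies share a node on layer `d`. -/
def connGraph (d q : ℕ) (hq : q ≤ d) (π σ : Equiv.Perm (Fin d)) :
    SimpleGraph ((Fin (d - q) → Bool) ⊕ (Fin (d - q) → Bool)) where
  Adj u v :=
    (∃ x y, u = Sum.inl x ∧ v = Sum.inr y ∧ connRel d q hq π σ x y) ∨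
    (∃ x y, u = Sum.inr y ∧ v = Sum.inl x ∧ connRel d q hq π σ x y)
  symm := by
    constructor
    rintro u v (⟨x, y, rfl, rfl, h⟩ | ⟨x, y, rfl, rfl, h⟩)
    · exact Or.inr ⟨x, y, rfl, rfl, h⟩
    · exact Or.inl ⟨x, y, rfl, rfl, h⟩
  loopless := by
    constructor
    rintro u (⟨x, y, h1, h2, -⟩ | ⟨x, y, h1, h2, -⟩) <;> subst h1 <;> simp at h2

/-- The child `x0*` or `x1*` (according to `t`) of the left sub-butterfly `x*`:
the `(q-1)`-dimensional left sub-butterfly obtained by additionally fixing bit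
`π (m+1)` (`0`-based: `π m`, `m = d - q`) to the value `t`. -/
def childL (d q : ℕ) (x : Fin (d - q) → Bool) (t : Bool) :
    Fin (d - (q - 1)) → Bool :=
  fun i => if h : (i : ℕ) < d - q then x ⟨i, h⟩ else t

/-- The child `*0y` or `*1y` (according to `t`) of the right sub-butterfly
`*y`: the `(q-1)`-dimensional right sub-butterfly obtained by additionally
fixing bit `σ q` (`0`-based: `σ (q-1)`) to the value `t`. -/
def childR (d q : ℕ) (y : Fin (d - q) → Bool) (t : Bool) :
    Fin (d - (q - 1)) → Bool :=
  fun j => if h : 0 < (j : ℕ) then y ⟨(j : ℕ) - 1, by have := j.isLt; omega⟩ else t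

/-- The child (according to `t`) of a vertex of the `q`-dimensional
sub-butterfly connectivity graph, as a vertex of the `(q-1)`-dimensional one. -/
def childV (d q : ℕ) :
    ((Fin (d - q) → Bool) ⊕ (Fin (d - q) → Bool)) → Bool →
      ((Fin (d - (q - 1)) → Bool) ⊕ (Fin (d - (q - 1)) → Bool))
  | Sum.inl x, t => Sum.inl (childL d q x t)
  | Sum.inr y, t => Sum.inr (childR d q y t)

/-- The value of physical bit `i` on a left `(q-1)`-dimensional sub-butterfly
`x'` (entry `s` of `x'` fixes bit `π s`), when bit `i` is among the fixed
bits; junk value `false` otherwise. -/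
def bitValL (d q : ℕ) (π : Equiv.Perm (Fin d)) (i : Fin d)
    (x' : Fin (d - (q - 1)) → Bool) : Bool :=
  if h : ((π.symm i : Fin d) : ℕ) < d - (q - 1) then
    x' ⟨((π.symm i : Fin d) : ℕ), h⟩ else false

/-- The value of physical bit `i` on a right `(q-1)`-dimensional sub-butterfly
`y'` (entry `j` of `y'` fixes bit `σ ((q-1) + j)`), when bit `i` is among the
fixed bits; junk value `false` otherwise. -/
def bitValR (d q : ℕ) (σ : Equiv.Perm (Fin d)) (i : Fin d)
    (y' : Fin (d - (q - 1)) → Bool) : Bool :=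
  if h : q - 1 ≤ ((σ.symm i : Fin d) : ℕ) ∧
      ((σ.symm i : Fin d) : ℕ) - (q - 1) < d - (q - 1) then
    y' ⟨((σ.symm i : Fin d) : ℕ) - (q - 1), h.2⟩ else false

/-- The value of physical bit `i` on a vertex of the `(q-1)`-dimensional
sub-butterfly connectivity graph. -/
def bitVal (d q : ℕ) (π σ : Equiv.Perm (Fin d)) (i : Fin d) :
    ((Fin (d - (q - 1)) → Bool) ⊕ (Fin (d - (q - 1)) → Bool)) → Bool
  | Sum.inl x' => bitValL d q π i x'
  | Sum.inr y' => bitValR d q σ i y'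

/-!
Call a bit `p` *shared* in dimension `r` if every left and every right `r`-dimensional
sub-butterfly fixes it (`π⁻¹ p < d - r` and `r ≤ σ⁻¹ p`). A left and a right sub-butterfly meet
iff they agree on the shared bits, so these are constant along edges; conversely, two vertices
agreeing on them are joined through a right and a left vertex, which meet. Hence the components of
the connectivity graph are exactly the classes of vertices with equal shared bits.

Passing from dimension `q` to `q - 1`, the hypotheses make exactly `l = π(m+1)` and `i = σ(q)`
newly shared. The children of a component `C` are precisely the vertices of dimension `q - 1`
carrying the old shared values of `C`, with arbitrary values at `i` and `l`; as `i ≠ l`, the four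
combinations of these two bits give four distinct components.
-/

open SimpleGraph

namespace SubButterfly

variable {d : ℕ} (π σ : Equiv.Perm (Fin d))

abbrev Vertex (d r : ℕ) := (Fin (d - r) → Bool) ⊕ (Fin (d - r) → Bool)

def leftBit (r : ℕ) (p : Fin d) (x : Fin (d - r) → Bool) : Bool :=
  if h : (π.symm p : ℕ) < d - r then x ⟨π.symm p, h⟩ else false

def rightBit (r : ℕ) (p : Fin d) (y : Fin (d - r) → Bool) : Bool :=
  if h : r ≤ (σ.symm p : ℕ) then y ⟨σ.symm p - r, by omega⟩ else false

def vertexBit (r : ℕ) (p : Fin d) : Vertex d r → Bool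
  | .inl x => leftBit π r p x
  | .inr y => rightBit σ r p y

def IsShared (r : ℕ) (p : Fin d) : Prop :=
  (π.symm p : ℕ) < d - r ∧ r ≤ (σ.symm p : ℕ)

def leftSubOf (r : ℕ) (b : Fin d → Bool) : Fin (d - r) → Bool :=
  fun c => b (π (Fin.castLE (Nat.sub_le d r) c))

def rightSubOf {r : ℕ} (hr : r ≤ d) (b : Fin d → Bool) : Fin (d - r) → Bool :=
  fun c => b (σ (Fin.castLE (by omega) (Fin.natAdd r c)))

lemma leftSubMem_iff {r : ℕ} (x : Fin (d - r) → Bool) (b : Fin d → Bool) :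
    leftSubMem d r π x b ↔ ∀ p, (π.symm p : ℕ) < d - r → b p = leftBit π r p x := by
  constructor
  · intro h p hp
    rw [leftBit, dif_pos hp, ← h]
    simp
  · intro h c
    simpa [leftBit] using h (π (Fin.castLE (Nat.sub_le d r) c)) (by simp)

lemma rightSubMem_iff {r : ℕ} (hr : r ≤ d) (y : Fin (d - r) → Bool) (b : Fin d → Bool) :
    rightSubMem d r hr σ y b ↔ ∀ p, r ≤ (σ.symm p : ℕ) → b p = rightBit σ r p y := by
  constructor
  · intro h p hp
    rw [rightBit, dif_pos hp, ← h]
    congr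
    rw [← Equiv.symm_apply_eq]
    ext
    simp only [Fin.natAdd_mk, Fin.castLE_mk]
    omega
  · intro h c
    have hc : r ≤ (σ.symm (σ (Fin.castLE (by omega) (Fin.natAdd r c))) : ℕ) := by simp
    rw [h _ hc, rightBit, dif_pos hc]
    congr
    simp

lemma leftSubMem_leftSubOf (r : ℕ) (b : Fin d → Bool) : leftSubMem d r π (leftSubOf π r b) b :=
  fun _ => rfl

lemma rightSubMem_rightSubOf {r : ℕ} (hr : r ≤ d) (b : Fin d → Bool) :
    rightSubMem d r hr σ (rightSubOf σ hr b) b :=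
  fun _ => rfl

section Level

variable {r : ℕ} (hr : r ≤ d)

lemma connRel_iff (x y : Fin (d - r) → Bool) :
    connRel d r hr π σ x y ↔ ∀ p, IsShared π σ r p → leftBit π r p x = rightBit σ r p y := by
  simp only [connRel, leftSubMem_iff, rightSubMem_iff]
  constructor
  · rintro ⟨b, hx, hy⟩ p ⟨hpx, hpy⟩
    rw [← hx p hpx, ← hy p hpy]
  · intro h
    refine ⟨fun p => if (π.symm p : ℕ) < d - r then leftBit π r p x else rightBit σ r p y,
      fun p hp => if_pos hp, fun p hp => ?_⟩
    dsimp only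
    split_ifs with hpx
    exacts [h p ⟨hpx, hp⟩, rfl]

lemma exists_connRel_right (x : Fin (d - r) → Bool) : ∃ y, connRel d r hr π σ x y :=
  ⟨_, _, (leftSubMem_iff π x _).2 fun _ _ => rfl, rightSubMem_rightSubOf σ hr _⟩

lemma exists_connRel_left (y : Fin (d - r) → Bool) : ∃ x, connRel d r hr π σ x y :=
  ⟨_, _, leftSubMem_leftSubOf π r _, (rightSubMem_iff σ hr y _).2 fun _ _ => rfl⟩

lemma connGraph_adj_inl_inr (x y : Fin (d - r) → Bool) :
    (connGraph d r hr π σ).Adj (.inl x) (.inr y) ↔ connRel d r hr π σ x y := by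
  simp [connGraph]

lemma vertexBit_eq_of_adj {u v : Vertex d r} (h : (connGraph d r hr π σ).Adj u v)
    {p : Fin d} (hp : IsShared π σ r p) : vertexBit π σ r p u = vertexBit π σ r p v := by
  rcases h with ⟨x, y, rfl, rfl, hxy⟩ | ⟨x, y, rfl, rfl, hxy⟩
  · exact (connRel_iff π σ hr x y).1 hxy p hp
  · exact ((connRel_iff π σ hr x y).1 hxy p hp).symm

lemma vertexBit_eq_of_reachable {u v : Vertex d r} (h : (connGraph d r hr π σ).Reachable u v)
    {p : Fin d} (hp : IsShared π σ r p) : vertexBit π σ r p u = vertexBit π σ r p v := by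
  obtain ⟨w⟩ := h
  induction w with
  | nil => rfl
  | cons ha _ ih => exact (vertexBit_eq_of_adj π σ hr ha hp).trans ih

lemma exists_reachable_inl (u : Vertex d r) :
    ∃ x, (connGraph d r hr π σ).Reachable u (.inl x) := by
  rcases u with x | y
  · exact ⟨x, .rfl⟩
  · obtain ⟨x, hxy⟩ := exists_connRel_left π σ hr y
    exact ⟨x, ((connGraph_adj_inl_inr π σ hr x y).2 hxy).reachable.symm⟩

lemma exists_reachable_inr (u : Vertex d r) :
    ∃ y, (connGraph d r hr π σ).Reachable u (.inr y) := by
  rcases u with x | y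
  · obtain ⟨y, hxy⟩ := exists_connRel_right π σ hr x
    exact ⟨y, ((connGraph_adj_inl_inr π σ hr x y).2 hxy).reachable⟩
  · exact ⟨y, .rfl⟩

theorem reachable_iff (u v : Vertex d r) :
    (connGraph d r hr π σ).Reachable u v ↔
      ∀ p, IsShared π σ r p → vertexBit π σ r p u = vertexBit π σ r p v := by
  refine ⟨fun h p hp => vertexBit_eq_of_reachable π σ hr h hp, fun h => ?_⟩
  obtain ⟨y, huy⟩ := exists_reachable_inr π σ hr u
  obtain ⟨x, hvx⟩ := exists_reachable_inl π σ hr v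
  have hxy : connRel d r hr π σ x y := (connRel_iff π σ hr x y).2 fun p hp =>
    calc leftBit π r p x = vertexBit π σ r p v := (vertexBit_eq_of_reachable π σ hr hvx hp).symm
      _ = vertexBit π σ r p u := (h p hp).symm
      _ = rightBit σ r p y := vertexBit_eq_of_reachable π σ hr huy hp
  exact huy.trans (((connGraph_adj_inl_inr π σ hr x y).2 hxy).reachable.symm.trans hvx.symm)

def componentOf (b : Fin d → Bool) : (connGraph d r hr π σ).ConnectedComponent :=
  (connGraph d r hr π σ).connectedComponentMk (.inl (leftSubOf π r b))

lemma mem_supp_componentOf_iff (b : Fin d → Bool) (w : Vertex d r) :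
    w ∈ (componentOf π σ hr b).supp ↔ ∀ p, IsShared π σ r p → vertexBit π σ r p w = b p := by
  rw [componentOf, ConnectedComponent.mem_supp_iff, ConnectedComponent.eq, reachable_iff]
  refine forall₂_congr fun p hp => ?_
  simp [vertexBit, leftBit, leftSubOf, hp.1]

end Level

lemma bitVal_eq_vertexBit {q : ℕ} (p : Fin d) (w : Vertex d (q - 1)) :
    bitVal d q π σ p w = vertexBit π σ (q - 1) p w := by
  rcases w with x | y
  · rfl
  · simp only [bitVal, bitValR, vertexBit, rightBit]
    split_ifs <;> first | rfl | omega

variable {q : ℕ} (hq1 : 1 ≤ q)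
include hq1

lemma leftBit_childL {p : Fin d} (hp : (π.symm p : ℕ) < d - q) (x : Fin (d - q) → Bool)
    (t : Bool) : leftBit π (q - 1) p (childL d q x t) = leftBit π q p x := by
  rw [leftBit, dif_pos (by omega), leftBit, dif_pos hp, childL, dif_pos hp]

lemma rightBit_childR {p : Fin d} (hp : q ≤ (σ.symm p : ℕ)) (y : Fin (d - q) → Bool)
    (t : Bool) : rightBit σ (q - 1) p (childR d q y t) = rightBit σ q p y := by
  rw [rightBit, dif_pos (by omega), rightBit, dif_pos hp, childR, dif_pos (by rw [Fin.val_mk]; omega)]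
  congr 2
  rw [Fin.val_mk]
  omega

lemma vertexBit_childV {p : Fin d} (hp : IsShared π σ q p) (u : Vertex d q) (t : Bool) :
    vertexBit π σ (q - 1) p (childV d q u t) = vertexBit π σ q p u := by
  rcases u with x | y
  exacts [leftBit_childL π hq1 hp.1 x t, rightBit_childR σ hq1 hp.2 y t]

lemma exists_eq_childV (hqd : q ≤ d) (w : Vertex d (q - 1)) : ∃ u t, w = childV d q u t := by
  rcases w with x | y
  · refine ⟨.inl fun c => x (Fin.castLE (by omega) c), x ⟨d - q, by omega⟩, ?_⟩
    simp only [childV, Sum.inl.injEq]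
    funext c
    rw [childL]
    split_ifs
    · rfl
    · congr 1; ext; dsimp only; omega
  · refine ⟨.inr fun c => y ⟨c + 1, by omega⟩, y ⟨0, by omega⟩, ?_⟩
    simp only [childV, Sum.inr.injEq]
    funext c
    rw [childR]
    split_ifs <;> (congr 1; ext; dsimp only; omega)

theorem exists_mem_supp_childV_iff (hqd : q ≤ d) (u₀ : Vertex d q) (w : Vertex d (q - 1)) :
    (∃ u ∈ ((connGraph d q hqd π σ).connectedComponentMk u₀).supp, ∃ t, w = childV d q u t) ↔
      ∀ p, IsShared π σ q p → vertexBit π σ (q - 1) p w = vertexBit π σ q p u₀ := by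
  simp only [ConnectedComponent.mem_supp_iff, ConnectedComponent.eq]
  constructor
  · rintro ⟨u, hu, t, rfl⟩ p hp
    rw [vertexBit_childV π σ hq1 hp, vertexBit_eq_of_reachable π σ hqd hu hp]
  · intro h
    obtain ⟨u, t, rfl⟩ := exists_eq_childV hq1 hqd w
    refine ⟨u, (reachable_iff π σ hqd u u₀).2 fun p hp => ?_, t, rfl⟩
    rw [← h p hp, vertexBit_childV π σ hq1 hp]

section ReusedDimensions

variable {i l : Fin d} (hi : (σ.symm i : ℕ) = q - 1 ∧ (π.symm i : ℕ) ≤ d - q)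
  (hl : (π.symm l : ℕ) = d - q ∧ q - 1 ≤ (σ.symm l : ℕ))
include hi hl

lemma isShared_sub_one_iff (hqd : q ≤ d) (p : Fin d) :
    IsShared π σ (q - 1) p ↔ IsShared π σ q p ∨ p = i ∨ p = l := by
  have hpi : p = i ↔ (σ.symm p : ℕ) = q - 1 := by
    rw [← hi.1, Fin.val_inj, σ.symm.injective.eq_iff]
  have hpl : p = l ↔ (π.symm p : ℕ) = d - q := by
    rw [← hl.1, Fin.val_inj, π.symm.injective.eq_iff]
  constructor
  · rintro ⟨h1, h2⟩
    by_cases h : (σ.symm p : ℕ) = q - 1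
    · exact .inr (.inl (hpi.2 h))
    by_cases h' : (π.symm p : ℕ) = d - q
    · exact .inr (.inr (hpl.2 h'))
    exact .inl ⟨by omega, by omega⟩
  · rintro (⟨h1, h2⟩ | rfl | rfl)
    · exact ⟨by omega, by omega⟩
    · exact ⟨by omega, by omega⟩
    · exact ⟨by omega, hl.2⟩

theorem mem_supp_componentOf_update_iff (hqd : q ≤ d) (hil : i ≠ l) (b : Fin d → Bool)
    (s : Bool × Bool) (w : Vertex d (q - 1)) :
    w ∈ (componentOf π σ (by omega : q - 1 ≤ d)
        (Function.update (Function.update b i s.1) l s.2)).supp ↔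
      (∀ p, IsShared π σ q p → vertexBit π σ (q - 1) p w = b p) ∧
        vertexBit π σ (q - 1) i w = s.1 ∧ vertexBit π σ (q - 1) l w = s.2 := by
  have hqi : ¬ IsShared π σ q i := fun h => by unfold IsShared at h; omega
  have hql : ¬ IsShared π σ q l := fun h => by unfold IsShared at h; omega
  simp only [mem_supp_componentOf_iff, isShared_sub_one_iff π σ hq1 hi hl hqd, or_imp,
    forall_and, forall_eq]
  rw [Function.update_self, Function.update_of_ne hil, Function.update_self]
  refine and_congr (forall₂_congr fun p hp => ?_) Iff.rfl
  rw [Function.update_of_ne (by rintro rfl; exact hql hp),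
    Function.update_of_ne (by rintro rfl; exact hqi hp)]

end ReusedDimensions

end SubButterfly

open SubButterfly in
/-- two reused dimensions: suppose `σ q = π j = i` for some
`j ≤ m+1`, and `π (m+1) = σ k = l` for some `k ∈ {q, …, d}`, with `i ≠ l`
(stated `1`-based in the paper; `0`-based here).  Then for every connected
component `C` of the `q`-dimensional sub-butterfly connectivity graph, the
children of the vertices of `C` split into exactly four connected components
of the `(q-1)`-dimensional connectivity graph, determined by the four possible
values of the pair of bits in positions `i` and `l`. -/
theorem connectivity_graph_component_two_reused_dimensions
    (d q : ℕ) (hq1 : 1 ≤ q) (hqd : q ≤ d) (π σ : Equiv.Perm (Fin d))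
    (i l : Fin d) (hil : i ≠ l)
    (hi : σ ⟨q - 1, by omega⟩ = i ∧ ∃ j : Fin d, (j : ℕ) ≤ d - q ∧ π j = i)
    (hl : π ⟨d - q, by omega⟩ = l ∧ ∃ k : Fin d, q - 1 ≤ (k : ℕ) ∧ σ k = l) :
    ∀ C : (connGraph d q hqd π σ).ConnectedComponent,
      ∃ f : Bool × Bool → (connGraph d (q - 1) (by omega) π σ).ConnectedComponent,
        Function.Injective f ∧
        (∀ w, (∃ u ∈ C.supp, ∃ t : Bool, w = childV d q u t) ↔
          ∃ s : Bool × Bool, w ∈ (f s).supp) ∧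
        (∀ w, (∃ u ∈ C.supp, ∃ t : Bool, w = childV d q u t) →
          ∀ s : Bool × Bool, (w ∈ (f s).supp ↔
            bitVal d q π σ i w = s.1 ∧ bitVal d q π σ l w = s.2)) := by
  obtain ⟨hσi, j, hj, hπj⟩ := hi
  obtain ⟨hπl, k, hk, hσk⟩ := hl
  have hi' : (σ.symm i : ℕ) = q - 1 ∧ (π.symm i : ℕ) ≤ d - q :=
    ⟨by simp [← hσi], by simpa [← hπj] using hj⟩
  have hl' : (π.symm l : ℕ) = d - q ∧ q - 1 ≤ (σ.symm l : ℕ) :=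
    ⟨by simp [← hπl], by simpa [← hσk] using hk⟩
  intro C
  induction C using ConnectedComponent.ind with | h u₀ => ?_
  let f (s : Bool × Bool) : (connGraph d (q - 1) (by omega) π σ).ConnectedComponent :=
    componentOf π σ _ (Function.update (Function.update (vertexBit π σ q · u₀) i s.1) l s.2)
  have hmem := mem_supp_componentOf_update_iff π σ hq1 hi' hl' hqd hil (vertexBit π σ q · u₀)
  simp_rw [exists_mem_supp_childV_iff π σ hq1 hqd, bitVal_eq_vertexBit]
  refine ⟨f, fun s s' hss' => ?_, fun w => ?_, fun w hw s => ?_⟩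
  · obtain ⟨w, hw⟩ := (f s).nonempty_supp
    have hw' : w ∈ (f s').supp := hss' ▸ hw
    rw [hmem] at hw hw'
    exact Prod.ext (hw.2.1.symm.trans hw'.2.1) (hw.2.2.symm.trans hw'.2.2)
  · exact ⟨fun h => ⟨(_, _), (hmem _ w).2 ⟨h, rfl, rfl⟩⟩, fun ⟨s, h⟩ => ((hmem s w).1 h).1⟩
  · rw [hmem]
    exact and_iff_right hw
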